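/- Let k ≥ 2 and consider n samples with original correctness indicators c_i ∈ {0,1} and original empirical accuracy π̂₀ = (Σ_i c_i)/n. A binary classifier marks each sample covered or uncovered; let R̂₀ be the fraction of samples with c_i = 1 that are uncovered (empirical Type I error), R̂₁ the fraction of samples with c_i = 0 that are covered (empirical Type II error), and w = (1 − R̂₀)·π̂₀ + R̂₁·(1 − π̂₀) the covered fraction of samples. Each covered sample is assigned a confidence z_i ∈ [1/k, 1] and keeps its post-calibration correctness equal to c_i (accuracy-preserving base calibrator); each uncovered sample is assigned confidence exactly 1/k and the fraction of uncovered samples with post-calibration correctness 1 is exactly 1/k. Assume at least one covered sample has c_i = 0, every covered sample with c_i = 0 has confidence z_i > 1/k, and no covered sample with c_i = 0 shares its confidence value with any other sample. Then the supremum over all binning schemes of the empirical binned ECE (computed from the assigned confidences and post-calibration correctness indicators) is strictly greater than w·(1 − π̂')/k = R̂₁·(1 − π̂₀)/k, where π̂' = (1 − R̂₀)·π̂₀/w is the empirical accuracy among covered samples. -/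

import Mathlib

open scoped Classical

/-- The empirical binned expected calibration error of `n` samples with correctness
indicators `c` and confidences `z`, for the binning scheme (partition of `[0,1]`)
whose bins are the fibers of the bin-assignment function `B`.  The sum ranges exactly
over the bins containing at least one sample. -/
noncomputable def binnedECE {n : ℕ} (c z : Fin n → ℝ) (B : ℝ → ℕ) : ℝ :=
  ∑ j ∈ Finset.image (fun i => B (z i)) Finset.univ,
    ((Finset.univ.filter fun i => B (z i) = j).card : ℝ) / n *
      |(∑ i ∈ Finset.univ.filter fun i => B (z i) = j, c i) /
          ((Finset.univ.filter fun i => B (z i) = j).card : ℝ) -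
        (∑ i ∈ Finset.univ.filter fun i => B (z i) = j, z i) /
          ((Finset.univ.filter fun i => B (z i) = j).card : ℝ)|

private lemma term_le_aux {n : ℕ} (hn : (0:ℝ) < n) (c z : Fin n → ℝ)
    (hc0 : ∀ i, 0 ≤ c i) (hc1 : ∀ i, c i ≤ 1)
    (hz0 : ∀ i, 0 ≤ z i) (hz1 : ∀ i, z i ≤ 1) (s : Finset (Fin n)) (hs : 0 < s.card) :
    (s.card : ℝ) / n * |(∑ i ∈ s, c i) / (s.card : ℝ) - (∑ i ∈ s, z i) / (s.card : ℝ)| ≤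
      (s.card : ℝ) / n := by
  have hm : (0:ℝ) < s.card := by exact_mod_cast hs
  have ha0 : 0 ≤ (∑ i ∈ s, c i) / (s.card : ℝ) :=
    div_nonneg (Finset.sum_nonneg fun i _ => hc0 i) hm.le
  have ha1 : (∑ i ∈ s, c i) / (s.card : ℝ) ≤ 1 := by
    rw [div_le_one hm]
    calc ∑ i ∈ s, c i ≤ ∑ _i ∈ s, (1:ℝ) := Finset.sum_le_sum fun i _ => hc1 i
      _ = s.card := by simp
  have hb0 : 0 ≤ (∑ i ∈ s, z i) / (s.card : ℝ) :=
    div_nonneg (Finset.sum_nonneg fun i _ => hz0 i) hm.le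
  have hb1 : (∑ i ∈ s, z i) / (s.card : ℝ) ≤ 1 := by
    rw [div_le_one hm]
    calc ∑ i ∈ s, z i ≤ ∑ _i ∈ s, (1:ℝ) := Finset.sum_le_sum fun i _ => hz1 i
      _ = s.card := by simp
  have habs : |(∑ i ∈ s, c i) / (s.card : ℝ) - (∑ i ∈ s, z i) / (s.card : ℝ)| ≤ 1 :=
    abs_le.mpr ⟨by linarith, by linarith⟩
  calc (s.card : ℝ) / n * |(∑ i ∈ s, c i) / (s.card : ℝ) - (∑ i ∈ s, z i) / (s.card : ℝ)|
      ≤ (s.card : ℝ) / n * 1 := mul_le_mul_of_nonneg_left habs (by positivity)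
    _ = (s.card : ℝ) / n := mul_one _

private lemma binnedECE_le_one {n : ℕ} (hn : 0 < n) (c z : Fin n → ℝ)
    (hc0 : ∀ i, 0 ≤ c i) (hc1 : ∀ i, c i ≤ 1)
    (hz0 : ∀ i, 0 ≤ z i) (hz1 : ∀ i, z i ≤ 1) (B : ℝ → ℕ) :
    binnedECE c z B ≤ 1 := by
  have hnR : (0:ℝ) < n := by exact_mod_cast hn
  unfold binnedECE
  have key : ∀ j ∈ Finset.image (fun i => B (z i)) Finset.univ,
      ((Finset.univ.filter fun i => B (z i) = j).card : ℝ) / n *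
        |(∑ i ∈ Finset.univ.filter fun i => B (z i) = j, c i) /
            ((Finset.univ.filter fun i => B (z i) = j).card : ℝ) -
          (∑ i ∈ Finset.univ.filter fun i => B (z i) = j, z i) /
            ((Finset.univ.filter fun i => B (z i) = j).card : ℝ)| ≤
      ((Finset.univ.filter fun i => B (z i) = j).card : ℝ) / n := by
    intro j hj
    obtain ⟨i, _, hi⟩ := Finset.mem_image.mp hj
    exact term_le_aux hnR c z hc0 hc1 hz0 hz1 _
      (Finset.card_pos.mpr ⟨i, by simp [hi]⟩)
  have hsum : (∑ j ∈ Finset.image (fun i => B (z i)) Finset.univ,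
      ((Finset.univ.filter fun i => B (z i) = j).card : ℝ)) = n := by
    rw [← Nat.cast_sum]
    norm_cast
    rw [← Finset.card_eq_sum_card_image]
    simp [Finset.card_univ]
  calc ∑ j ∈ Finset.image (fun i => B (z i)) Finset.univ,
      ((Finset.univ.filter fun i => B (z i) = j).card : ℝ) / n *
        |(∑ i ∈ Finset.univ.filter fun i => B (z i) = j, c i) /
            ((Finset.univ.filter fun i => B (z i) = j).card : ℝ) -
          (∑ i ∈ Finset.univ.filter fun i => B (z i) = j, z i) /
            ((Finset.univ.filter fun i => B (z i) = j).card : ℝ)|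
      ≤ ∑ j ∈ Finset.image (fun i => B (z i)) Finset.univ,
          ((Finset.univ.filter fun i => B (z i) = j).card : ℝ) / n :=
        Finset.sum_le_sum key
    _ = (∑ j ∈ Finset.image (fun i => B (z i)) Finset.univ,
          ((Finset.univ.filter fun i => B (z i) = j).card : ℝ)) / n := by
        rw [Finset.sum_div]
    _ = 1 := by rw [hsum, div_self (ne_of_gt hnR)]

/-- Proposition 5 of the paper (lower bound of Meta-Cal).  `c` are the original
correctness indicators with empirical accuracy `π̂₀`; a binary classifier covers the
samples with `cov i = true`; `R̂₀` (empirical Type I error) is the fraction of correct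
samples that are uncovered, `R̂₁` (empirical Type II error) the fraction of misclassified
samples that are covered, `w = (1 - R̂₀) π̂₀ + R̂₁ (1 - π̂₀)` the covered fraction.
Covered samples receive a confidence in `[1/k, 1]` and keep their correctness
(`c' i = c i`, accuracy-preserving base calibrator); uncovered samples receive confidence
exactly `1/k` and exactly a fraction `1/k` of them have post-calibration correctness `1`.
If some covered sample is misclassified, every covered misclassified sample has
confidence `> 1/k`, and no covered misclassified sample shares its confidence with any
other sample, then the supremum over all binning schemes of the empirical binned ECE
(computed from assigned confidences and post-calibration correctness) is strictly
greater than `w (1 - π̂') / k = R̂₁ (1 - π̂₀) / k`, where `π̂' = (1 - R̂₀) π̂₀ / w` is the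
empirical accuracy among covered samples. -/
theorem sup_binnedECE_metaCal_lower_bound
    (k n : ℕ) (hk : 2 ≤ k) (c c' z : Fin n → ℝ) (cov : Fin n → Bool)
    (hc : ∀ i, c i = 0 ∨ c i = 1)
    (hc' : ∀ i, c' i = 0 ∨ c' i = 1)
    (hzcov : ∀ i, cov i = true → z i ∈ Set.Icc (1 / (k : ℝ)) 1)
    (hkeep : ∀ i, cov i = true → c' i = c i)
    (hzunc : ∀ i, cov i = false → z i = 1 / (k : ℝ))
    (hfrac : (∑ i ∈ Finset.univ.filter fun i => cov i = false, c' i) /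
        ((Finset.univ.filter fun i : Fin n => cov i = false).card : ℝ) = 1 / (k : ℝ))
    (hex : ∃ i, cov i = true ∧ c i = 0)
    (hgt : ∀ i, cov i = true → c i = 0 → 1 / (k : ℝ) < z i)
    (hsep : ∀ i j, i ≠ j → cov i = true → c i = 0 → z i ≠ z j)
    (π₀ R₀ R₁ w π' : ℝ)
    (hπ₀ : π₀ = (∑ i, c i) / n)
    (hR₀ : R₀ = ((Finset.univ.filter fun i : Fin n => c i = 1 ∧ cov i = false).card : ℝ) /
        ((Finset.univ.filter fun i : Fin n => c i = 1).card : ℝ))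
    (hR₁ : R₁ = ((Finset.univ.filter fun i : Fin n => c i = 0 ∧ cov i = true).card : ℝ) /
        ((Finset.univ.filter fun i : Fin n => c i = 0).card : ℝ))
    (hw : w = (1 - R₀) * π₀ + R₁ * (1 - π₀))
    (hπ' : π' = (1 - R₀) * π₀ / w) :
    w * (1 - π') / k = R₁ * (1 - π₀) / k ∧
      w * (1 - π') / k < sSup {e : ℝ | ∃ B : ℝ → ℕ, e = binnedECE c' z B} := by
  classical
  obtain ⟨i₀, hi₀cov, hi₀c⟩ := hex
  have hn : 0 < n := i₀.pos
  have hnR : (0:ℝ) < n := by exact_mod_cast hn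
  have hk1 : (1:ℝ) ≤ (k:ℝ) := by exact_mod_cast le_trans (by norm_num) hk
  have hkR : (0:ℝ) < (k:ℝ) := lt_of_lt_of_le one_pos hk1
  -- bounds on z and c'
  have hz0 : ∀ i, 0 ≤ z i := by
    intro i
    cases hcovi : cov i
    · rw [hzunc i hcovi]; positivity
    · exact le_trans (by positivity) (hzcov i hcovi).1
  have hz1 : ∀ i, z i ≤ 1 := by
    intro i
    cases hcovi : cov i
    · rw [hzunc i hcovi]; rw [div_le_one hkR]; linarith
    · exact (hzcov i hcovi).2
  have hc'0 : ∀ i, 0 ≤ c' i := fun i => by rcases hc' i with h | h <;> rw [h] <;> norm_num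
  have hc'1 : ∀ i, c' i ≤ 1 := fun i => by rcases hc' i with h | h <;> rw [h] <;> norm_num
  -- counting
  set M : Finset (Fin n) := Finset.univ.filter fun i : Fin n => c i = 0 ∧ cov i = true with hM
  have hi₀M : i₀ ∈ M := by simp [hM, hi₀c, hi₀cov]
  have hMne : M.Nonempty := ⟨i₀, hi₀M⟩
  have hMpos : (0:ℝ) < M.card := by exact_mod_cast Finset.card_pos.mpr hMne
  set A : ℕ := (Finset.univ.filter fun i : Fin n => c i = 1).card with hA
  set B0 : ℕ := (Finset.univ.filter fun i : Fin n => c i = 0).card with hB0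
  have hB0pos : (0:ℝ) < B0 := by
    have : 0 < B0 := Finset.card_pos.mpr ⟨i₀, by simp [hB0, hi₀c]⟩
    exact_mod_cast this
  have hsumc : (∑ i, c i) = (A : ℝ) := by
    rw [hA, Finset.card_filter]
    push_cast
    refine Finset.sum_congr rfl fun i _ => ?_
    rcases hc i with h | h <;> simp [h]
  have hAB : (A:ℝ) + B0 = n := by
    have h1 : B0 = (Finset.univ.filter fun i : Fin n => ¬ c i = 1).card := by
      rw [hB0]
      congr 1
      apply Finset.filter_congr
      intro i _
      rcases hc i with h | h <;> simp [h]
    have h2 : A + B0 = n := by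
      rw [h1, hA, Finset.card_filter_add_card_filter_not, Finset.card_univ,
        Fintype.card_fin]
    exact_mod_cast h2
  have hπ₀A : π₀ = (A:ℝ) / n := by rw [hπ₀, hsumc]
  have h1π₀ : 1 - π₀ = (B0:ℝ) / n := by
    rw [hπ₀A]
    field_simp
    linarith
  have hR1eq : R₁ * (1 - π₀) = (M.card : ℝ) / n := by
    rw [hR₁, h1π₀]
    rw [div_mul_div_comm, mul_comm ((B0:ℝ)) ((n:ℝ)), mul_div_mul_right _ _ (ne_of_gt hB0pos)]
  have hπ₀0 : 0 ≤ π₀ := by rw [hπ₀A]; positivity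
  have hR0le : R₀ ≤ 1 := by
    rw [hR₀]
    have hsub : (Finset.univ.filter fun i : Fin n => c i = 1 ∧ cov i = false) ⊆
        Finset.univ.filter fun i : Fin n => c i = 1 := by
      intro x hx
      simp only [Finset.mem_filter] at hx ⊢
      exact ⟨hx.1, hx.2.1⟩
    have hle : ((Finset.univ.filter fun i : Fin n => c i = 1 ∧ cov i = false).card : ℝ) ≤
        (A:ℝ) := by exact_mod_cast Finset.card_le_card hsub
    rcases eq_or_lt_of_le (Nat.cast_nonneg A : (0:ℝ) ≤ A) with h | h
    · have hz : ((Finset.univ.filter fun i : Fin n => c i = 1 ∧ cov i = false).card : ℝ) = 0 := by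
        have h0 : (0:ℝ) ≤ _ := Nat.cast_nonneg
          (Finset.univ.filter fun i : Fin n => c i = 1 ∧ cov i = false).card
        linarith [hle, h.symm ▸ hle]
      rw [hz, zero_div]; norm_num
    · rw [div_le_one h]; exact hle
  have hwpos : 0 < w := by
    have h1 : 0 ≤ (1 - R₀) * π₀ := mul_nonneg (by linarith) hπ₀0
    have h2 : 0 < (M.card : ℝ) / n := div_pos hMpos hnR
    rw [hw]
    linarith [hR1eq]
  have hkey : w * (1 - π') = R₁ * (1 - π₀) := by
    have h1 : w * (1 - π') = w - (1 - R₀) * π₀ := by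
      rw [hπ', mul_sub, mul_one, mul_div_cancel₀ _ (ne_of_gt hwpos)]
    rw [h1, hw]; ring
  refine ⟨by rw [hkey], ?_⟩
  have hT : w * (1 - π') / k = (M.card : ℝ) / (n * k) := by
    rw [hkey, hR1eq, div_div]
  -- the separating binning scheme
  set L : List ℝ := (Finset.image z Finset.univ).sort (· ≤ ·) with hL
  set Bf : ℝ → ℕ := fun x => List.idxOf x L with hBf
  have hzmem : ∀ i : Fin n, z i ∈ L := fun i =>
    (Finset.mem_sort _).mpr (Finset.mem_image_of_mem z (Finset.mem_univ i))
  have hBinj : ∀ i j : Fin n, Bf (z i) = Bf (z j) → z i = z j := fun i j h =>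
    (List.idxOf_inj (hzmem i) (y := z j)).mp h
  set f : ℕ → ℝ := fun j =>
    ((Finset.univ.filter fun i => Bf (z i) = j).card : ℝ) / n *
      |(∑ i ∈ Finset.univ.filter fun i => Bf (z i) = j, c' i) /
          ((Finset.univ.filter fun i => Bf (z i) = j).card : ℝ) -
        (∑ i ∈ Finset.univ.filter fun i => Bf (z i) = j, z i) /
          ((Finset.univ.filter fun i => Bf (z i) = j).card : ℝ)| with hfd
  have hbe : binnedECE c' z Bf = ∑ j ∈ Finset.image (fun i => Bf (z i)) Finset.univ, f j := rfl
  have hf0 : ∀ j : ℕ, 0 ≤ f j := by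
    intro j
    rw [hfd]
    positivity
  have hfilter : ∀ i ∈ M, (Finset.univ.filter fun i' => Bf (z i') = Bf (z i)) = {i} := by
    intro i hi
    have hiM := Finset.mem_filter.mp hi
    ext i'
    simp only [Finset.mem_filter, Finset.mem_univ, true_and, Finset.mem_singleton]
    constructor
    · intro h
      by_contra hne
      exact hsep i i' (fun h' => hne h'.symm) hiM.2.2 hiM.2.1 (hBinj i' i h).symm
    · rintro rfl; rfl
  have hterm : ∀ i ∈ M, f (Bf (z i)) = z i / n := by
    intro i hi
    have hiM := Finset.mem_filter.mp hi
    have hci : c' i = 0 := by rw [hkeep i hiM.2.2, hiM.2.1]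
    simp only [hfd, hfilter i hi, Finset.card_singleton, Finset.sum_singleton, Nat.cast_one]
    rw [hci, zero_div, div_one, zero_sub, abs_neg, abs_of_nonneg (hz0 i)]
    ring
  have hinj : ∀ x ∈ M, ∀ y ∈ M, Bf (z x) = Bf (z y) → x = y := by
    intro x hx y hy h
    by_contra hne
    have hxM := Finset.mem_filter.mp hx
    exact hsep x y hne hxM.2.2 hxM.2.1 (hBinj x y h)
  have h1 : ∑ i ∈ M, f (Bf (z i)) ≤
      ∑ j ∈ Finset.image (fun i => Bf (z i)) Finset.univ, f j := by
    rw [← Finset.sum_image hinj]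
    exact Finset.sum_le_sum_of_subset_of_nonneg
      (Finset.image_subset_image (Finset.subset_univ M)) (fun j _ _ => hf0 j)
  have hconst : ∑ _i ∈ M, 1 / ((k:ℝ) * n) = (M.card : ℝ) / (n * k) := by
    rw [Finset.sum_const, nsmul_eq_mul, mul_one_div, mul_comm ((k:ℝ)) ((n:ℝ))]
  have h3 : (M.card : ℝ) / (n * k) < ∑ i ∈ M, z i / n := by
    rw [← hconst]
    refine Finset.sum_lt_sum_of_nonempty hMne fun i hi => ?_
    have hiM := Finset.mem_filter.mp hi
    have h := hgt i hiM.2.2 hiM.2.1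
    have h' : 1 < z i * k := by
      rw [div_lt_iff₀ hkR] at h
      linarith
    rw [div_lt_div_iff₀ (by positivity) hnR]
    nlinarith
  have hECE : (M.card : ℝ) / (n * k) < binnedECE c' z Bf := by
    rw [hbe]
    calc (M.card : ℝ) / (n * k) < ∑ i ∈ M, z i / n := h3
      _ = ∑ i ∈ M, f (Bf (z i)) := (Finset.sum_congr rfl hterm).symm
      _ ≤ _ := h1
  have hbdd : BddAbove {e : ℝ | ∃ B : ℝ → ℕ, e = binnedECE c' z B} := by
    refine ⟨1, fun e he => ?_⟩
    obtain ⟨B, rfl⟩ := he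
    exact binnedECE_le_one hn c' z hc'0 hc'1 hz0 hz1 B
  have hmem : binnedECE c' z Bf ∈ {e : ℝ | ∃ B : ℝ → ℕ, e = binnedECE c' z B} := ⟨Bf, rfl⟩
  calc w * (1 - π') / k = (M.card : ℝ) / (n * k) := hT
    _ < binnedECE c' z Bf := hECE
    _ ≤ sSup {e : ℝ | ∃ B : ℝ → ℕ, e = binnedECE c' z B} := le_csSup hbdd hmem
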